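/- arXiv:2210.06590 — 3 statements merged into one kernel-verified Lean document; each statement's English description precedes it below -/
import Mathlib

section
/- Let X be a real n×p matrix, and let a, k be integers with 1 ≤ a ≤ n, a ≤ k ≤ p. Suppose s° is an optimal solution of Problem (2), i.e., s° is a binary vector with Σ_i s°_i ≤ k maximizing π(s) over all binary s with Σ_i s_i ≤ k. Then there exists δ > 0 such that for every η ∈ [η(s°), η(s°) + δ], every optimal solution of Problem (7) with parameter η (i.e., every binary s^A with Σ_i s^A_i ≤ k and η(s^A) ≤ η maximizing μ over this feasible set) is an optimal solution of Problem (2), i.e., π(s^A) = π(s°). -/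
open Matrix BigOperators

noncomputable section

/-- Squared Frobenius norm of a real matrix. -/
def frobSq {n m : ℕ} (M : Matrix (Fin n) (Fin m) ℝ) : ℝ := ∑ i, ∑ j, (M i j) ^ 2

/-- A vector is binary if each entry is 0 or 1. -/
def IsBinary {p : ℕ} (s : Fin p → ℝ) : Prop := ∀ i, s i = 0 ∨ s i = 1

/-- Stiefel set: matrices with orthonormal columns. -/
def Stiefel (n a : ℕ) : Set (Matrix (Fin n) (Fin a) ℝ) := {U | Uᵀ * U = 1}

/-- Squared Euclidean norm of column `i` of `X`. -/
def colNormSq {n p : ℕ} (X : Matrix (Fin n) (Fin p) ℝ) (i : Fin p) : ℝ :=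
  ∑ r, (X r i) ^ 2

/-- μ(s) = Σ_i s_i ‖X_i‖². -/
def muF {n p : ℕ} (X : Matrix (Fin n) (Fin p) ℝ) (s : Fin p → ℝ) : ℝ :=
  ∑ i, s i * colNormSq X i

/-- η(s) = inf over Stiefel matrices U of ‖X diag(s) − U Uᵀ X diag(s)‖_F². -/
def etaF {n p : ℕ} (X : Matrix (Fin n) (Fin p) ℝ) (a : ℕ) (s : Fin p → ℝ) : ℝ :=
  sInf ((fun U : Matrix (Fin n) (Fin a) ℝ =>
    frobSq (X * diagonal s - U * Uᵀ * (X * diagonal s))) '' Stiefel n a)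

/-- π(s) = sup over Stiefel matrices U of ‖U Uᵀ X diag(s)‖_F². -/
def piF {n p : ℕ} (X : Matrix (Fin n) (Fin p) ℝ) (a : ℕ) (s : Fin p → ℝ) : ℝ :=
  sSup ((fun U : Matrix (Fin n) (Fin a) ℝ =>
    frobSq (U * Uᵀ * (X * diagonal s))) '' Stiefel n a)

/-- Feasibility for Problem (2): binary with at most k ones. -/
def Feas {p : ℕ} (k : ℕ) (s : Fin p → ℝ) : Prop :=
  IsBinary s ∧ ∑ i, s i ≤ (k : ℝ)

/-- Optimality for Problem (2): feasible and maximizing π. -/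
def Opt2 {n p : ℕ} (X : Matrix (Fin n) (Fin p) ℝ) (a k : ℕ) (s : Fin p → ℝ) : Prop :=
  Feas k s ∧ ∀ s' : Fin p → ℝ, Feas k s' → piF X a s' ≤ piF X a s

/-- Feasibility for Problem (7) with parameter η. -/
def Feas7 {n p : ℕ} (X : Matrix (Fin n) (Fin p) ℝ) (a k : ℕ) (η : ℝ) (s : Fin p → ℝ) : Prop :=
  Feas k s ∧ etaF X a s ≤ η

/-- Optimality for Problem (7): feasible and maximizing μ. -/
def Opt7 {n p : ℕ} (X : Matrix (Fin n) (Fin p) ℝ) (a k : ℕ) (η : ℝ) (s : Fin p → ℝ) : Prop :=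
  Feas7 X a k η s ∧ ∀ s' : Fin p → ℝ, Feas7 X a k η s' → muF X s' ≤ muF X s


lemma frobSq_eq_trace {n m : ℕ} (M : Matrix (Fin n) (Fin m) ℝ) :
    frobSq M = trace (Mᵀ * M) := by
  rw [frobSq, Finset.sum_comm]
  simp [trace, diag, mul_apply, sq]

lemma frobSq_nonneg {n m : ℕ} (M : Matrix (Fin n) (Fin m) ℝ) : 0 ≤ frobSq M :=
  Finset.sum_nonneg fun _ _ => Finset.sum_nonneg fun _ _ => sq_nonneg _

lemma frobSq_sub_mul_add_frobSq_mul {n m : ℕ} {P : Matrix (Fin n) (Fin n) ℝ}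
    (hPt : Pᵀ = P) (hP2 : P * P = P) (M : Matrix (Fin n) (Fin m) ℝ) :
    frobSq (M - P * M) + frobSq (P * M) = frobSq M := by
  have hPP : P * (P * M) = P * M := by rw [← Matrix.mul_assoc, hP2]
  have hcross : (P * M)ᵀ * (P * M) = Mᵀ * (P * M) := by
    rw [transpose_mul, hPt, Matrix.mul_assoc, hPP]
  have hres : (M - P * M)ᵀ * (M - P * M) = Mᵀ * M - Mᵀ * (P * M) := by
    rw [transpose_sub, Matrix.sub_mul, Matrix.mul_sub, Matrix.mul_sub, hcross, transpose_mul, hPt,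
      Matrix.mul_assoc]
    abel
  rw [frobSq_eq_trace, frobSq_eq_trace, frobSq_eq_trace, hres, hcross, trace_sub,
    sub_add_cancel]

lemma stiefel_nonempty {n a : ℕ} (h : a ≤ n) : (Stiefel n a).Nonempty := by
  refine ⟨(1 : Matrix (Fin n) (Fin n) ℝ).submatrix id (Fin.castLE h), ?_⟩
  change _ = _
  rw [transpose_submatrix, transpose_one, ← submatrix_mul _ _ _ _ _ Function.bijective_id,
    Matrix.one_mul, submatrix_one _ (Fin.castLE_injective h)]

lemma mul_transpose_idem_of_mem_stiefel {n a : ℕ} {U : Matrix (Fin n) (Fin a) ℝ}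
    (hU : U ∈ Stiefel n a) : U * Uᵀ * (U * Uᵀ) = U * Uᵀ := by
  rw [Matrix.mul_assoc, ← Matrix.mul_assoc Uᵀ U, show Uᵀ * U = 1 from hU, Matrix.one_mul]

lemma etaF_add_piF {n p : ℕ} (X : Matrix (Fin n) (Fin p) ℝ) {a : ℕ} (han : a ≤ n)
    (s : Fin p → ℝ) : etaF X a s + piF X a s = frobSq (X * diagonal s) := by
  set M := X * diagonal s
  set T := (fun U : Matrix (Fin n) (Fin a) ℝ => frobSq (U * Uᵀ * M)) '' Stiefel n a
  have hpyth :
      ∀ U ∈ Stiefel n a, frobSq (M - U * Uᵀ * M) + frobSq (U * Uᵀ * M) = frobSq M :=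
    fun U hU => frobSq_sub_mul_add_frobSq_mul (by rw [transpose_mul, transpose_transpose])
      (mul_transpose_idem_of_mem_stiefel hU) M
  have hbdd : BddAbove T := by
    refine ⟨frobSq M, ?_⟩
    rintro _ ⟨U, hU, rfl⟩
    linarith [hpyth U hU, frobSq_nonneg (M - U * Uᵀ * M)]
  have hsInf : frobSq M - sSup T = sInf ((frobSq M - ·) '' T) :=
    Antitone.map_csSup_of_continuousAt (by fun_prop) (fun _ _ h => sub_le_sub_left h _)
      ((stiefel_nonempty han).image _) hbdd
  have himage : (fun U : Matrix (Fin n) (Fin a) ℝ => frobSq (M - U * Uᵀ * M)) '' Stiefel n a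
      = (frobSq M - ·) '' T := by
    rw [Set.image_image]
    exact Set.image_congr fun U hU => eq_sub_of_add_eq (hpyth U hU)
  change sInf (_ '' _) + sSup T = frobSq M
  rw [himage, ← hsInf, sub_add_cancel]

lemma frobSq_mul_diagonal_of_isBinary {n p : ℕ} (X : Matrix (Fin n) (Fin p) ℝ)
    {s : Fin p → ℝ} (hs : IsBinary s) : frobSq (X * diagonal s) = muF X s := by
  rw [frobSq, muF, Finset.sum_comm]
  refine Finset.sum_congr rfl fun i _ => ?_
  rw [colNormSq, Finset.mul_sum]
  refine Finset.sum_congr rfl fun r _ => ?_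
  rw [mul_diagonal]
  rcases hs i with h | h <;> rw [h] <;> ring

lemma etaF_eq_muF_sub_piF {n p : ℕ} (X : Matrix (Fin n) (Fin p) ℝ) {a : ℕ} (han : a ≤ n)
    {s : Fin p → ℝ} (hs : IsBinary s) : etaF X a s = muF X s - piF X a s := by
  rw [← frobSq_mul_diagonal_of_isBinary X hs, ← etaF_add_piF X han s, add_sub_cancel_right]

lemma setOf_feas_finite {p : ℕ} (k : ℕ) : {s : Fin p → ℝ | Feas k s}.Finite := by
  refine (Set.Finite.pi (t := fun _ : Fin p => ({0, 1} : Set ℝ))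
    fun _ => Set.toFinite _).subset fun s hs i _ => ?_
  rcases hs.1 i with h | h <;> simp [h]

lemma Set.Finite.exists_pos_lt_sub {V : Set ℝ} (hV : V.Finite) (v : ℝ) :
    ∃ δ > 0, ∀ w ∈ V, w < v → δ < v - w := by
  have hclosed : IsClosed {w ∈ V | w < v} := (hV.subset (Set.sep_subset V (· < v))).isClosed
  obtain ⟨ε, hε, hball⟩ :=
    Metric.isOpen_iff.1 hclosed.isOpen_compl v fun hv => lt_irrefl v hv.2
  refine ⟨ε / 2, half_pos hε, fun w hw hwv => ?_⟩
  have hfar : ¬ dist w v < ε := fun h => hball (Metric.mem_ball.2 h) ⟨hw, hwv⟩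
  rw [Real.dist_eq, abs_sub_comm, abs_of_pos (sub_pos.2 hwv)] at hfar
  linarith

theorem stmt_0_general {n p : ℕ} (X : Matrix (Fin n) (Fin p) ℝ) (a k : ℕ)
    (han : a ≤ n)
    (so : Fin p → ℝ) (hso : Opt2 X a k so) :
    ∃ δ > (0 : ℝ), ∀ η : ℝ, etaF X a so ≤ η → η ≤ etaF X a so + δ →
      ∀ sA : Fin p → ℝ, Opt7 X a k η sA → piF X a sA = piF X a so := by
  -- `δ` is below every gap between π(s°) and a smaller value of π on the finitely many
  -- feasible points; as η = μ − π on them, μ(s°) ≤ μ(sA) forces the gap π(s°) − π(sA) ≤ δ.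
  obtain ⟨δ, hδ, hgap⟩ :=
    ((setOf_feas_finite k).image (piF X a)).exists_pos_lt_sub (piF X a so)
  refine ⟨δ, hδ, fun η hη hηδ sA ⟨⟨hsA, hηA⟩, hmax⟩ => ?_⟩
  have hμ : muF X so ≤ muF X sA := hmax so ⟨hso.1, hη⟩
  rw [etaF_eq_muF_sub_piF X han hsA.1] at hηA
  rw [etaF_eq_muF_sub_piF X han hso.1.1] at hηδ
  refine le_antisymm (hso.2 sA hsA) (not_lt.1 fun hlt => ?_)
  linarith [hgap _ ⟨sA, hsA, rfl⟩ hlt]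

/-- Theorem 4: for η slightly above η(s°), optimal solutions of Problem (7)
are optimal solutions of Problem (2). -/
theorem stmt_0 {n p : ℕ} (X : Matrix (Fin n) (Fin p) ℝ) (a k : ℕ)
    (ha1 : 1 ≤ a) (han : a ≤ n) (hak : a ≤ k) (hkp : k ≤ p)
    (so : Fin p → ℝ) (hso : Opt2 X a k so) :
    ∃ δ > (0 : ℝ), ∀ η : ℝ, etaF X a so ≤ η → η ≤ etaF X a so + δ →
      ∀ sA : Fin p → ℝ, Opt7 X a k η sA → piF X a sA = piF X a so :=
  stmt_0_general X a k han so hso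
end
end

section
/- Let X be a real n×p matrix and let a, k be integers with 1 ≤ a ≤ n, k ≤ p. Let V* ∈ ℝ^{n×a} with V*ᵀV* = I_a minimize ‖X − V·Vᵀ·X‖_F over all V ∈ ℝ^{n×a} with VᵀV = I_a (a solution of the classical PCA problem), set ε := X − V*·V*ᵀ·X, and let σ ⊆ {1,…,p} be a set of k indices of columns of ε with the largest Euclidean norms. If s° is an optimal solution of Problem (2), then η(s°) ≤ ‖ε·diag(s°)‖_F² ≤ Σ_{i∈σ} ‖ε_i‖². -/
/-!
The PCA minimiser `V` is itself admissible in the infimum defining `η`, which gives the first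
inequality. For binary `s`, `‖ε diag(s)‖²` is the sum of the `‖ε_i‖²` over the support of `s`, a
set of at most `k` indices, and no such sum exceeds the one over the `k` largest columns.
-/

open Matrix BigOperators

noncomputable section

namespace Finset

variable {ι M : Type*} [AddCommMonoid M] [LinearOrder M] [IsOrderedCancelAddMonoid M]

lemma sum_le_sum_of_card_le_of_forall_le {A B : Finset ι} {f : ι → M}
    (hf : ∀ i ∈ B, 0 ≤ f i) (hcard : #A ≤ #B) (hle : ∀ j ∈ A, ∀ i ∈ B, f j ≤ f i) :
    ∑ j ∈ A, f j ≤ ∑ i ∈ B, f i := by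
  rcases B.eq_empty_or_nonempty with rfl | hB
  · rw [card_eq_zero.1 (Nat.le_zero.1 hcard)]
  obtain ⟨i₀, hi₀, hmin⟩ := B.exists_min_image f hB
  calc ∑ j ∈ A, f j ≤ #A • f i₀ := sum_le_card_nsmul _ _ _ fun j hj => hle j hj i₀ hi₀
    _ ≤ #B • f i₀ := nsmul_le_nsmul_left (hf i₀ hi₀) hcard
    _ ≤ ∑ i ∈ B, f i := card_nsmul_le_sum _ _ _ hmin

lemma sum_le_sum_of_card_le_of_forall_notMem_le [DecidableEq ι] {T σ : Finset ι} {f : ι → M}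
    (hf : ∀ i, 0 ≤ f i) (hcard : #T ≤ #σ) (hσ : ∀ i ∈ σ, ∀ j ∉ σ, f j ≤ f i) :
    ∑ i ∈ T, f i ≤ ∑ i ∈ σ, f i :=
  sum_sdiff_le_sum_sdiff.1 <| sum_le_sum_of_card_le_of_forall_le (fun i _ => hf i)
    (card_sdiff_le_card_sdiff_iff.2 hcard)
    fun j hj i hi => hσ i (mem_sdiff.1 hi).1 j (mem_sdiff.1 hj).2

end Finset

lemma colNormSq_nonneg {n p : ℕ} (X : Matrix (Fin n) (Fin p) ℝ) (i : Fin p) :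
    0 ≤ colNormSq X i :=
  Finset.sum_nonneg fun _ _ => sq_nonneg _

lemma frobSq_mul_diagonal {n p : ℕ} (M : Matrix (Fin n) (Fin p) ℝ) (s : Fin p → ℝ) :
    frobSq (M * diagonal s) = ∑ j, s j ^ 2 * colNormSq M j := by
  simp only [frobSq, colNormSq, mul_diagonal, Finset.mul_sum]
  rw [Finset.sum_comm]
  exact Finset.sum_congr rfl fun _ _ => Finset.sum_congr rfl fun _ _ => by ring

lemma etaF_le {n p : ℕ} (X : Matrix (Fin n) (Fin p) ℝ) (s : Fin p → ℝ) {a : ℕ}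
    {U : Matrix (Fin n) (Fin a) ℝ} (hU : U ∈ Stiefel n a) :
    etaF X a s ≤ frobSq (X * diagonal s - U * Uᵀ * (X * diagonal s)) :=
  csInf_le ⟨0, by rintro _ ⟨U, -, rfl⟩; exact frobSq_nonneg _⟩ ⟨U, hU, rfl⟩

namespace IsBinary

variable {p : ℕ} {s : Fin p → ℝ}

lemma sq_eq (hs : IsBinary s) (i : Fin p) : s i ^ 2 = s i := by
  rcases hs i with h | h <;> simp [h]

lemma sum_mul_eq_sum_filter (hs : IsBinary s) (f : Fin p → ℝ) :
    ∑ i, s i * f i = ∑ i ∈ Finset.univ.filter (s · = 1), f i := by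
  rw [Finset.sum_filter]
  exact Finset.sum_congr rfl fun i _ => by rcases hs i with h | h <;> simp [h]

lemma sum_eq_card_filter (hs : IsBinary s) :
    ∑ i, s i = (Finset.univ.filter (s · = 1)).card := by
  simpa using hs.sum_mul_eq_sum_filter 1

end IsBinary

theorem stmt_7_general {n p : ℕ} (X : Matrix (Fin n) (Fin p) ℝ) (a k : ℕ)
    (V : Matrix (Fin n) (Fin a) ℝ) (hV : Vᵀ * V = 1)
    (ε : Matrix (Fin n) (Fin p) ℝ) (hε : ε = X - V * Vᵀ * X)
    (σ : Finset (Fin p)) (hσcard : σ.card = k)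
    (hσmax : ∀ i ∈ σ, ∀ j ∉ σ, colNormSq ε j ≤ colNormSq ε i)
    (so : Fin p → ℝ) (hso : Opt2 X a k so) :
    etaF X a so ≤ frobSq (ε * diagonal so) ∧
    frobSq (ε * diagonal so) ≤ ∑ i ∈ σ, colNormSq ε i := by
  obtain ⟨⟨hbin, hsum⟩, -⟩ := hso
  constructor
  · have hres : ε * diagonal so = X * diagonal so - V * Vᵀ * (X * diagonal so) := by
      rw [hε, Matrix.sub_mul, Matrix.mul_assoc]
    exact hres ▸ etaF_le X so hV
  · have hcard : (Finset.univ.filter (so · = 1)).card ≤ σ.card := by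
      rw [hσcard, ← Nat.cast_le (α := ℝ), ← hbin.sum_eq_card_filter]
      exact hsum
    rw [frobSq_mul_diagonal]
    simp only [hbin.sq_eq, hbin.sum_mul_eq_sum_filter]
    exact Finset.sum_le_sum_of_card_le_of_forall_notMem_le (colNormSq_nonneg ε) hcard hσmax

/-- Corollary 7: a priori bound on η(s°) from the classical PCA residual. -/
theorem stmt_7 {n p : ℕ} (X : Matrix (Fin n) (Fin p) ℝ) (a k : ℕ)
    (ha1 : 1 ≤ a) (han : a ≤ n) (hkp : k ≤ p)
    (V : Matrix (Fin n) (Fin a) ℝ) (hV : Vᵀ * V = 1)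
    (hVopt : ∀ V' ∈ Stiefel n a,
      frobSq (X - V * Vᵀ * X) ≤ frobSq (X - V' * V'ᵀ * X))
    (ε : Matrix (Fin n) (Fin p) ℝ) (hε : ε = X - V * Vᵀ * X)
    (σ : Finset (Fin p)) (hσcard : σ.card = k)
    (hσmax : ∀ i ∈ σ, ∀ j ∉ σ, colNormSq ε j ≤ colNormSq ε i)
    (so : Fin p → ℝ) (hso : Opt2 X a k so) :
    etaF X a so ≤ frobSq (ε * diagonal so) ∧
    frobSq (ε * diagonal so) ≤ ∑ i ∈ σ, colNormSq ε i :=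
  stmt_7_general X a k V hV ε hε σ hσcard hσmax so hso
end
end

section
/- Let X be a real n×p matrix, let b ≥ 1 be an integer, and for each l ∈ {1,…,b} let a_l, k_l be integers with 1 ≤ a_l ≤ n and k_l ≤ p, and let η_l ≥ 0. Call a tuple (s_1,…,s_b) of binary vectors in {0,1}^p block-feasible if Σ_j s_{lj} ≤ k_l for every l and Σ_l s_{lj} ≤ 1 for every j ∈ {1,…,p}. Suppose (s_1°,…,s_b°) is an optimal solution of Problem (8), i.e., it is block-feasible and maximizes Σ_l π_l(s_l) over all block-feasible tuples, and suppose η_l(s_l°) ≤ η_l for every l. If (s_1^A,…,s_b^A) is an optimal solution of Problem (9), i.e., it is block-feasible, satisfies η_l(s_l^A) ≤ η_l for every l, and maximizes Σ_l μ(s_l) over all block-feasible tuples satisfying these bounds, then Σ_l π_l(s_l°) − Σ_l π_l(s_l^A) ≤ Σ_l η_l. -/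
open Matrix BigOperators

noncomputable section

/-- Block feasibility for the Disjoint Support Block Sparse PCA problem. -/
def BlockFeas {p b : ℕ} (k : Fin b → ℕ) (s : Fin b → Fin p → ℝ) : Prop :=
  (∀ l, IsBinary (s l)) ∧ (∀ l, ∑ j, s l j ≤ (k l : ℝ)) ∧
  (∀ j, ∑ l, s l j ≤ (1 : ℝ))

lemma frobSq_add_of_transpose_mul_eq_zero {n m : ℕ} {A B : Matrix (Fin n) (Fin m) ℝ}
    (h : Aᵀ * B = 0) : frobSq (A + B) = frobSq A + frobSq B := by
  have h' : Bᵀ * A = 0 := by simpa using congrArg transpose h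
  simp only [frobSq_eq_trace, transpose_add, Matrix.add_mul, Matrix.mul_add, h, h', add_zero,
    zero_add, trace_add]

lemma frobSq_proj_add_frobSq_sub_proj {n a m : ℕ} {U : Matrix (Fin n) (Fin a) ℝ}
    (hU : U ∈ Stiefel n a) (M : Matrix (Fin n) (Fin m) ℝ) :
    frobSq (U * Uᵀ * M) + frobSq (M - U * Uᵀ * M) = frobSq M := by
  have hU : Uᵀ * U = 1 := hU
  have horth : (U * Uᵀ * M)ᵀ * (M - U * Uᵀ * M) = 0 := by
    have : Mᵀ * U * (Uᵀ * U) * Uᵀ * M = Mᵀ * U * Uᵀ * M := by rw [hU, Matrix.mul_one]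
    simp only [transpose_mul, transpose_transpose, Matrix.mul_sub, ← Matrix.mul_assoc] at this ⊢
    rw [this, sub_self]
  rw [← frobSq_add_of_transpose_mul_eq_zero horth, add_sub_cancel]

lemma muF_eq_frobSq {n p : ℕ} (X : Matrix (Fin n) (Fin p) ℝ) {s : Fin p → ℝ}
    (hs : IsBinary s) : muF X s = frobSq (X * diagonal s) := by
  have hsq : ∀ j, s j ^ 2 = s j := fun j => by rcases hs j with h | h <;> simp [h]
  simp only [muF, frobSq, colNormSq, mul_diagonal, mul_pow, hsq, Finset.mul_sum]
  rw [Finset.sum_comm]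
  simp only [mul_comm]

lemma etaF_nonneg {n p : ℕ} (X : Matrix (Fin n) (Fin p) ℝ) (a : ℕ) (s : Fin p → ℝ) :
    0 ≤ etaF X a s :=
  Real.sInf_nonneg (by rintro _ ⟨U, -, rfl⟩; exact frobSq_nonneg _)

lemma piF_eq_muF_sub_etaF {n p : ℕ} (X : Matrix (Fin n) (Fin p) ℝ) {a : ℕ} (han : a ≤ n)
    {s : Fin p → ℝ} (hs : IsBinary s) : piF X a s = muF X s - etaF X a s := by
  set M := X * diagonal s
  have hres : BddBelow ((fun U : Matrix (Fin n) (Fin a) ℝ =>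
      frobSq (M - U * Uᵀ * M)) '' Stiefel n a) :=
    ⟨0, by rintro _ ⟨U, -, rfl⟩; exact frobSq_nonneg _⟩
  -- `x ↦ ‖M‖² − x` is continuous and antitone, so it carries the infimum `η` to the supremum `π`.
  rw [muF_eq_frobSq X hs, etaF, Antitone.map_csInf_of_continuousAt (f := (frobSq M - ·))
    (continuous_sub_left _).continuousAt (fun _ _ h => sub_le_sub_left h _)
    ((stiefel_nonempty han).image _) hres, Set.image_image, piF]
  congr 1
  refine Set.image_congr fun U hU => ?_
  rw [← frobSq_proj_add_frobSq_sub_proj hU M, add_sub_cancel_right]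

theorem stmt_12_general {n p b : ℕ} (X : Matrix (Fin n) (Fin p) ℝ)
    (a k : Fin b → ℕ) (η : Fin b → ℝ)
    (han : ∀ l, a l ≤ n)
    (so : Fin b → Fin p → ℝ)
    (hsofeas : BlockFeas k so)
    (hsoeta : ∀ l, etaF X (a l) (so l) ≤ η l)
    (sA : Fin b → Fin p → ℝ)
    (hsAfeas : BlockFeas k sA) (hsAeta : ∀ l, etaF X (a l) (sA l) ≤ η l)
    (hsAopt : ∀ s : Fin b → Fin p → ℝ, BlockFeas k s →
      (∀ l, etaF X (a l) (s l) ≤ η l) →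
      ∑ l, muF X (s l) ≤ ∑ l, muF X (sA l)) :
    ∑ l, piF X (a l) (so l) - ∑ l, piF X (a l) (sA l) ≤ ∑ l, η l := by
  have hpi : ∀ s, BlockFeas k s →
      ∑ l, piF X (a l) (s l) = ∑ l, muF X (s l) - ∑ l, etaF X (a l) (s l) := fun s hs => by
    rw [← Finset.sum_sub_distrib]
    exact Finset.sum_congr rfl fun l _ => piF_eq_muF_sub_etaF X (han l) (hs.1 l)
  have hmu : ∑ l, muF X (so l) ≤ ∑ l, muF X (sA l) := hsAopt so hsofeas hsoeta
  have hetaA : ∑ l, etaF X (a l) (sA l) ≤ ∑ l, η l := Finset.sum_le_sum fun l _ => hsAeta l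
  have hetao : 0 ≤ ∑ l, etaF X (a l) (so l) :=
    Finset.sum_nonneg fun l _ => etaF_nonneg X (a l) (so l)
  rw [hpi so hsofeas, hpi sA hsAfeas]
  linarith

/-- Proposition 10: worst-case bound for the block-disjoint problem
(Problem (8) vs its geometric approximation (9)). -/
theorem stmt_12 {n p b : ℕ} (X : Matrix (Fin n) (Fin p) ℝ)
    (hb : 1 ≤ b) (a k : Fin b → ℕ) (η : Fin b → ℝ)
    (ha1 : ∀ l, 1 ≤ a l) (han : ∀ l, a l ≤ n) (hkp : ∀ l, k l ≤ p)
    (hη : ∀ l, 0 ≤ η l)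
    (so : Fin b → Fin p → ℝ)
    (hsofeas : BlockFeas k so)
    (hsoopt : ∀ s : Fin b → Fin p → ℝ, BlockFeas k s →
      ∑ l, piF X (a l) (s l) ≤ ∑ l, piF X (a l) (so l))
    (hsoeta : ∀ l, etaF X (a l) (so l) ≤ η l)
    (sA : Fin b → Fin p → ℝ)
    (hsAfeas : BlockFeas k sA) (hsAeta : ∀ l, etaF X (a l) (sA l) ≤ η l)
    (hsAopt : ∀ s : Fin b → Fin p → ℝ, BlockFeas k s →
      (∀ l, etaF X (a l) (s l) ≤ η l) →
      ∑ l, muF X (s l) ≤ ∑ l, muF X (sA l)) :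
    ∑ l, piF X (a l) (so l) - ∑ l, piF X (a l) (sA l) ≤ ∑ l, η l :=
  stmt_12_general X a k η han so hsofeas hsoeta sA hsAfeas hsAeta hsAopt
end
end
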